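/- arXiv:2111.15220 — 2 statements merged into one kernel-verified Lean document; each statement's English description precedes it below -/
import Mathlib

section
/- Let G = G₁ ∪ G₂ be a graph with V(G₁ ∩ G₂) = K, where G₁ is an induced subgraph of G. Let (H, f) be a valued cover of G, and let H_i denote the restriction of H to G_i for i = 1, 2. Suppose R is a strictly f-degenerate transversal of H₁. Let H* be obtained from H₂ by deleting all edges inside H_K, and let f* agree with f except that f*(x) = 1 for each x ∈ R ∩ H_K. If R ∩ H_K extends to a strictly f*-degenerate transversal R* of H*, then R ∪ R* is a strictly f-degenerate transversal of H. -/
open Classical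

/-- `H` is a cover (DP-cover) of `G` over the list assignment `L`:
the vertex set of `H` is (implicitly) the disjoint union of the fibers
`L_v = {v} × L v`, each fiber is independent, edges of `H` join only fibers of
adjacent vertices of `G`, and between two fibers they form a (partial) matching. -/
def IsCover {V : Type} (G : SimpleGraph V) (L : V → Finset ℕ)
    (H : SimpleGraph (V × ℕ)) : Prop :=
  (∀ p q : V × ℕ, H.Adj p q → G.Adj p.1 q.1 ∧ p.2 ∈ L p.1 ∧ q.2 ∈ L q.1) ∧
  (∀ p q q' : V × ℕ, H.Adj p q → H.Adj p q' → q.1 = q'.1 → q = q')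

/-- `T` meets the fiber `{v} × L v` of every vertex `v ∈ A` exactly once,
and contains nothing else. -/
def IsTransversalOn {V : Type} (L : V → Finset ℕ) (A : Set V)
    (T : Finset (V × ℕ)) : Prop :=
  (∀ p ∈ T, p.1 ∈ A ∧ p.2 ∈ L p.1) ∧ ∀ v ∈ A, ∃! c : ℕ, (v, c) ∈ T

/-- A transversal of the whole cover. -/
def IsTransversal {V : Type} (L : V → Finset ℕ) (T : Finset (V × ℕ)) : Prop :=
  IsTransversalOn L Set.univ T

/-- `T` is an independent set of `H`. -/
def IndepSet {V : Type} (H : SimpleGraph (V × ℕ)) (T : Finset (V × ℕ)) : Prop :=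
  ∀ p ∈ T, ∀ q ∈ T, ¬ H.Adj p q

/-- `T` is strictly `f`-degenerate: every nonempty (induced) subgraph of `H[T]`
has a vertex `x` of degree less than `f x`. -/
def StrictDeg {V : Type} (H : SimpleGraph (V × ℕ)) (f : V × ℕ → ℕ)
    (T : Finset (V × ℕ)) : Prop :=
  ∀ S ⊆ T, S.Nonempty → ∃ x ∈ S, (S.filter fun y => H.Adj x y).card < f x

private lemma glue_aux {V : Type} [DecidableEq V]
    (G : SimpleGraph V) (A₁ A₂ : Set V)
    (G₂ : SimpleGraph V)
    (hG₂A : ∀ u v, G₂.Adj u v → u ∈ A₂ ∧ v ∈ A₂)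
    (hDecomp : ∀ u v, G.Adj u v ↔ ((G.Adj u v ∧ u ∈ A₁ ∧ v ∈ A₁) ∨ G₂.Adj u v))
    (L : V → Finset ℕ) (H : SimpleGraph (V × ℕ)) (hH : IsCover G L H)
    (f : V × ℕ → ℕ)
    (R : Finset (V × ℕ)) (hR : IsTransversalOn L A₁ R)
    (Hstar : SimpleGraph (V × ℕ))
    (hHstar : ∀ p q : V × ℕ, Hstar.Adj p q ↔
      (H.Adj p q ∧ G₂.Adj p.1 q.1 ∧ ¬ (p.1 ∈ A₁ ∩ A₂ ∧ q.1 ∈ A₁ ∩ A₂)))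
    (fstar : V × ℕ → ℕ)
    (hfstar : ∀ x : V × ℕ, fstar x = if x ∈ R ∧ x.1 ∈ A₁ ∩ A₂ then 1 else f x)
    (Rstar : Finset (V × ℕ)) (hRstar : IsTransversalOn L A₂ Rstar)
    (hRstardeg : StrictDeg Hstar fstar Rstar)
    (hExt : R.filter (fun x => x.1 ∈ A₁ ∩ A₂) ⊆ Rstar) :
    ∀ S : Finset (V × ℕ), S ⊆ R ∪ Rstar → (∃ p ∈ S, p ∉ R) →
      ∃ x ∈ S, x ∉ R ∧ (S.filter fun y => H.Adj x y).card < f x := by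
  -- elements of Rstar over A₁ are in R
  have hKey : ∀ p ∈ Rstar, p.1 ∈ A₁ → p ∈ R := by
    intro p hp hp1
    have hp2 : p.1 ∈ A₂ := (hRstar.1 p hp).1
    obtain ⟨c, hc, -⟩ := hR.2 p.1 hp1
    have hcs : (p.1, c) ∈ Rstar := hExt (Finset.mem_filter.2 ⟨hc, ⟨hp1, hp2⟩⟩)
    obtain ⟨c', -, huniq'⟩ := hRstar.2 p.1 hp2
    have h1 : p.2 = c' := huniq' p.2 (by simpa using hp)
    have h2 : c = c' := huniq' c hcs
    have : p = (p.1, c) := by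
      exact Prod.ext rfl (h1.trans h2.symm)
    rw [this]; exact hc
  intro S
  induction S using Finset.strongInduction with
  | _ S ih =>
    rintro hSsub ⟨p, hpS, hpR⟩
    -- a vertex of S not in R is in Rstar and over A₂ \ A₁
    have hOut : ∀ q ∈ S, q ∉ R → q ∈ Rstar ∧ q.1 ∉ A₁ := by
      intro q hqS hqR
      have hq : q ∈ Rstar := by
        rcases Finset.mem_union.1 (hSsub hqS) with h | h
        · exact absurd h hqR
        · exact h
      exact ⟨hq, fun h1 => hqR (hKey q hq h1)⟩
    have hT : S ∩ Rstar ⊆ Rstar := Finset.inter_subset_right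
    have hTne : (S ∩ Rstar).Nonempty :=
      ⟨p, Finset.mem_inter.2 ⟨hpS, (hOut p hpS hpR).1⟩⟩
    obtain ⟨x, hxT, hxdeg⟩ := hRstardeg (S ∩ Rstar) hT hTne
    have hxS : x ∈ S := (Finset.mem_inter.1 hxT).1
    have hxRs : x ∈ Rstar := (Finset.mem_inter.1 hxT).2
    by_cases hxR : x ∈ R
    · -- x ∈ R over K : fstar x = 1, x isolated in Hstar[S ∩ Rstar]
      have hxK : x.1 ∈ A₁ ∩ A₂ := ⟨(hR.1 x hxR).1, (hRstar.1 x hxRs).1⟩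
      have hf1 : fstar x = 1 := by rw [hfstar]; simp [hxR, hxK]
      rw [hf1, Nat.lt_one_iff, Finset.card_eq_zero] at hxdeg
      have hiso : ∀ y ∈ S ∩ Rstar, ¬ Hstar.Adj x y := by
        intro y hy hadj
        have : y ∈ (S ∩ Rstar).filter fun y => Hstar.Adj x y :=
          Finset.mem_filter.2 ⟨hy, hadj⟩
        simp [hxdeg] at this
      -- recurse on S.erase x
      have hpx : p ≠ x := fun h => hpR (h ▸ hxR)
      obtain ⟨y, hyS', hyR, hydeg⟩ := ih (S.erase x) (Finset.erase_ssubset hxS)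
        ((Finset.erase_subset x S).trans hSsub)
        ⟨p, Finset.mem_erase.2 ⟨hpx, hpS⟩, hpR⟩
      have hyS : y ∈ S := Finset.mem_of_mem_erase hyS'
      -- y is not H-adjacent to x
      have hnadj : ¬ H.Adj y x := by
        intro hadj
        have hy1 : y.1 ∉ A₁ := (hOut y hyS hyR).2
        have hG : G.Adj y.1 x.1 := (hH.1 y x hadj).1
        have hG2 : G₂.Adj y.1 x.1 := by
          rcases (hDecomp y.1 x.1).1 hG with ⟨-, h1, -⟩ | h
          · exact absurd h1 hy1
          · exact h
        have : Hstar.Adj y x := (hHstar y x).2 ⟨hadj, hG2, fun h => hy1 h.1.1⟩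
        exact hiso y (Finset.mem_inter.2 ⟨hyS, (hOut y hyS hyR).1⟩) this.symm
      refine ⟨y, hyS, hyR, ?_⟩
      have : S.filter (fun z => H.Adj y z) = (S.erase x).filter (fun z => H.Adj y z) := by
        rw [Finset.filter_erase, Finset.erase_eq_of_notMem]
        simp [hnadj]
      rw [this]; exact hydeg
    · -- x ∉ R : its H-neighbours in S are exactly its Hstar-neighbours in S ∩ Rstar
      have hx1 : x.1 ∉ A₁ := (hOut x hxS hxR).2
      have hff : fstar x = f x := by rw [hfstar]; simp [hxR]
      refine ⟨x, hxS, hxR, ?_⟩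
      have hset : S.filter (fun y => H.Adj x y)
          = (S ∩ Rstar).filter (fun y => Hstar.Adj x y) := by
        ext y
        simp only [Finset.mem_filter, Finset.mem_inter]
        constructor
        · rintro ⟨hyS, hadj⟩
          have hG : G.Adj x.1 y.1 := (hH.1 x y hadj).1
          have hG2 : G₂.Adj x.1 y.1 := by
            rcases (hDecomp x.1 y.1).1 hG with ⟨-, h1, -⟩ | h
            · exact absurd h1 hx1
            · exact h
          have hy2 : y.1 ∈ A₂ := (hG₂A x.1 y.1 hG2).2
          have hyRs : y ∈ Rstar := by
            rcases Finset.mem_union.1 (hSsub hyS) with h | h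
            · exact hExt (Finset.mem_filter.2 ⟨h, ⟨(hR.1 y h).1, hy2⟩⟩)
            · exact h
          exact ⟨⟨hyS, hyRs⟩, (hHstar x y).2 ⟨hadj, hG2, fun h => hx1 h.1.1⟩⟩
        · rintro ⟨⟨hyS, -⟩, hadj⟩
          exact ⟨hyS, ((hHstar x y).1 hadj).1⟩
      rw [hset, ← hff]; exact hxdeg

/-- Gluing lemma: if `G = G₁ ∪ G₂` with `G₁` the induced subgraph on `A₁`,
`G₂` a subgraph on `A₂`, and `K = A₁ ∩ A₂`, `R` a strictly `f`-degenerate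
transversal of `H₁`, and `R ∩ H_K` extends to a strictly `f*`-degenerate
transversal `R*` of `H*` (obtained from `H₂` by removing the edges inside
`H_K`, with `f*` equal to `1` on `R ∩ H_K` and to `f` elsewhere), then
`R ∪ R*` is a strictly `f`-degenerate transversal of `H`. -/
theorem glue_strictDeg_transversal {V : Type} [Fintype V] [DecidableEq V]
    (G : SimpleGraph V) (A₁ A₂ : Set V) (hUnion : A₁ ∪ A₂ = Set.univ)
    (G₂ : SimpleGraph V) (hG₂le : G₂ ≤ G)
    (hG₂A : ∀ u v, G₂.Adj u v → u ∈ A₂ ∧ v ∈ A₂)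
    -- `G = G₁ ∪ G₂`, where `G₁` is the subgraph of `G` induced on `A₁`:
    (hDecomp : ∀ u v, G.Adj u v ↔ ((G.Adj u v ∧ u ∈ A₁ ∧ v ∈ A₁) ∨ G₂.Adj u v))
    (L : V → Finset ℕ) (H : SimpleGraph (V × ℕ)) (hH : IsCover G L H)
    (f : V × ℕ → ℕ)
    (R : Finset (V × ℕ)) (hR : IsTransversalOn L A₁ R) (hRdeg : StrictDeg H f R)
    (Hstar : SimpleGraph (V × ℕ))
    (hHstar : ∀ p q : V × ℕ, Hstar.Adj p q ↔
      (H.Adj p q ∧ G₂.Adj p.1 q.1 ∧ ¬ (p.1 ∈ A₁ ∩ A₂ ∧ q.1 ∈ A₁ ∩ A₂)))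
    (fstar : V × ℕ → ℕ)
    (hfstar : ∀ x : V × ℕ, fstar x = if x ∈ R ∧ x.1 ∈ A₁ ∩ A₂ then 1 else f x)
    (Rstar : Finset (V × ℕ)) (hRstar : IsTransversalOn L A₂ Rstar)
    (hRstardeg : StrictDeg Hstar fstar Rstar)
    (hExt : R.filter (fun x => x.1 ∈ A₁ ∩ A₂) ⊆ Rstar) :
    IsTransversal L (R ∪ Rstar) ∧ StrictDeg H f (R ∪ Rstar) := by
  have hKey : ∀ p ∈ Rstar, p.1 ∈ A₁ → p ∈ R := by
    intro p hp hp1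
    have hp2 : p.1 ∈ A₂ := (hRstar.1 p hp).1
    obtain ⟨c, hc, -⟩ := hR.2 p.1 hp1
    have hcs : (p.1, c) ∈ Rstar := hExt (Finset.mem_filter.2 ⟨hc, ⟨hp1, hp2⟩⟩)
    obtain ⟨c', -, huniq'⟩ := hRstar.2 p.1 hp2
    have h1 : p.2 = c' := huniq' p.2 (by simpa using hp)
    have h2 : c = c' := huniq' c hcs
    have : p = (p.1, c) := by exact Prod.ext rfl (h1.trans h2.symm)
    rw [this]; exact hc
  constructor
  · constructor
    · intro q hq
      rcases Finset.mem_union.1 hq with h | h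
      · exact ⟨Set.mem_univ _, (hR.1 q h).2⟩
      · exact ⟨Set.mem_univ _, (hRstar.1 q h).2⟩
    · intro v _
      have huniq : ∀ c c', (v, c) ∈ R ∪ Rstar → (v, c') ∈ R ∪ Rstar → c = c' := by
        have key : ∀ c, (v, c) ∈ R ∪ Rstar → (v, c) ∈ R → v ∈ A₂ → (v, c) ∈ Rstar := by
          intro c _ hcR hv2
          exact hExt (Finset.mem_filter.2 ⟨hcR, ⟨(hR.1 _ hcR).1, hv2⟩⟩)
        intro c c' hc hc'
        rcases Finset.mem_union.1 hc with h | h <;> rcases Finset.mem_union.1 hc' with h' | h'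
        · obtain ⟨d, -, hu⟩ := hR.2 v (hR.1 _ h).1
          rw [hu c h, hu c' h']
        · have hv2 : v ∈ A₂ := (hRstar.1 _ h').1
          obtain ⟨d, -, hu⟩ := hRstar.2 v hv2
          rw [hu c (key c hc h hv2), hu c' h']
        · have hv2 : v ∈ A₂ := (hRstar.1 _ h).1
          obtain ⟨d, -, hu⟩ := hRstar.2 v hv2
          rw [hu c h, hu c' (key c' hc' h' hv2)]
        · obtain ⟨d, -, hu⟩ := hRstar.2 v (hRstar.1 _ h).1
          rw [hu c h, hu c' h']
      have hv : v ∈ A₁ ∪ A₂ := hUnion ▸ Set.mem_univ v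
      rcases hv with hv | hv
      · obtain ⟨c, hc, -⟩ := hR.2 v hv
        exact ⟨c, Finset.mem_union_left _ hc, fun c' hc' =>
          huniq c' c hc' (Finset.mem_union_left _ hc)⟩
      · obtain ⟨c, hc, -⟩ := hRstar.2 v hv
        exact ⟨c, Finset.mem_union_right _ hc, fun c' hc' =>
          huniq c' c hc' (Finset.mem_union_right _ hc)⟩
  · intro S hS hSne
    by_cases hall : ∀ q ∈ S, q ∈ R
    · exact hRdeg S hall hSne
    · push_neg at hall
      obtain ⟨x, hxS, hxR, hdeg⟩ := glue_aux G A₁ A₂ G₂ hG₂A hDecomp L H hH f R hR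
        Hstar hHstar fstar hfstar Rstar hRstar hRstardeg hExt S hS
        (by obtain ⟨q, hq1, hq2⟩ := hall; exact ⟨q, hq1, hq2⟩)
      exact ⟨x, hxS, hdeg⟩
end

section
/- Let G be a graph and suppose G is the ℓ-sum (ℓ ∈ {1, 2, 3}) of graphs G₁ and G₂, i.e., G = G₁ ∪ G₂ and G₁ ∩ G₂ = K_ℓ, a complete graph on ℓ vertices. Suppose that for i = 1, 2 and every subgraph K of G_i isomorphic to K_ℓ, every DP-5-coloring of K extends to a DP-5-coloring of G_i. Then for every subgraph K of G₁ isomorphic to K_ℓ, every DP-5-coloring of K extends to a DP-5-coloring of G. -/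
open Classical

/-- The subgraph of `G` induced on `A`, as a graph on the same vertex set. -/
def restrictG {V : Type} (G : SimpleGraph V) (A : Set V) : SimpleGraph V where
  Adj u v := G.Adj u v ∧ u ∈ A ∧ v ∈ A
  symm := ⟨by rintro u v ⟨h, h1, h2⟩; exact ⟨h.symm, h2, h1⟩⟩
  loopless := ⟨by rintro v ⟨h, -⟩; exact G.irrefl h⟩

/-- Every DP-5-coloring of any `ℓ`-clique of `G'` contained in `A` extends to a
DP-5-coloring of `G'` (on the vertex set `A`). -/
def ExtendsDP {V : Type} [DecidableEq V] (G' : SimpleGraph V) (A : Finset V)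
    (ℓ : ℕ) : Prop :=
  ∀ K : Finset V, K ⊆ A → G'.IsNClique ℓ K →
    ∀ L : V → Finset ℕ, (∀ v, Finset.Icc 1 5 ⊆ L v) →
      ∀ H : SimpleGraph (V × ℕ), IsCover G' L H →
        ∀ R₀ : Finset (V × ℕ), IsTransversalOn L ↑K R₀ → IndepSet H R₀ →
          ∃ T : Finset (V × ℕ), IsTransversalOn L ↑A T ∧ IndepSet H T ∧ R₀ ⊆ T

/-- If `G` is the `ℓ`-sum (`ℓ ∈ {1,2,3}`) of `G₁` and `G₂` (on vertex sets
`A₁`, `A₂`, meeting in an `ℓ`-clique), and in each `Gᵢ` every DP-5-coloring of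
a `K_ℓ`-subgraph extends, then in `G` every DP-5-coloring of a `K_ℓ`-subgraph
of `G₁` extends. -/
theorem ellSum_extend_DP5 {V : Type} [Fintype V] [DecidableEq V]
    (G : SimpleGraph V) (ℓ : ℕ) (hℓ : ℓ = 1 ∨ ℓ = 2 ∨ ℓ = 3)
    (A₁ A₂ : Finset V) (hUnion : A₁ ∪ A₂ = Finset.univ)
    (hClique : G.IsNClique ℓ (A₁ ∩ A₂))
    (hEdges : ∀ u v, G.Adj u v → (u ∈ A₁ ∧ v ∈ A₁) ∨ (u ∈ A₂ ∧ v ∈ A₂))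
    (h₁ : ExtendsDP (restrictG G ↑A₁) A₁ ℓ)
    (h₂ : ExtendsDP (restrictG G ↑A₂) A₂ ℓ) :
    ∀ K : Finset V, K ⊆ A₁ → G.IsNClique ℓ K →
      ∀ L : V → Finset ℕ, (∀ v, Finset.Icc 1 5 ⊆ L v) →
        ∀ H : SimpleGraph (V × ℕ), IsCover G L H →
          ∀ R₀ : Finset (V × ℕ), IsTransversalOn L ↑K R₀ → IndepSet H R₀ →
            ∃ T : Finset (V × ℕ), IsTransversal L T ∧ IndepSet H T ∧ R₀ ⊆ T := by
  intro K hKA₁ hKclique L hL H hH R₀ hR₀ hR₀ind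
  classical
  -- restriction of the cover to a vertex set
  let Hr : Finset V → SimpleGraph (V × ℕ) := fun A =>
    { Adj := fun p q => H.Adj p q ∧ p.1 ∈ A ∧ q.1 ∈ A
      symm := ⟨by rintro p q ⟨h, h1, h2⟩; exact ⟨h.symm, h2, h1⟩⟩
      loopless := ⟨by rintro p ⟨h, -⟩; exact H.irrefl h⟩ }
  have hHr : ∀ A : Finset V, IsCover (restrictG G ↑A) L (Hr A) := by
    intro A
    constructor
    · rintro p q ⟨h, h1, h2⟩
      obtain ⟨hadj, hp, hq⟩ := hH.1 p q h
      exact ⟨⟨hadj, h1, h2⟩, hp, hq⟩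
    · rintro p q q' ⟨h, -, -⟩ ⟨h', -, -⟩ he
      exact hH.2 p q q' h h' he
  -- K is a clique of `restrictG G A₁`
  have hK1 : (restrictG G ↑A₁).IsNClique ℓ K := by
    refine ⟨?_, hKclique.2⟩
    intro u hu v hv huv
    exact ⟨hKclique.1 hu hv huv, hKA₁ hu, hKA₁ hv⟩
  have hR₀ind1 : IndepSet (Hr A₁) R₀ := by
    rintro p hp q hq ⟨h, -, -⟩
    exact hR₀ind p hp q hq h
  obtain ⟨T₁, hT₁tr, hT₁ind, hR₀T₁⟩ := h₁ K hKA₁ hK1 L hL (Hr A₁) (hHr A₁) R₀ hR₀ hR₀ind1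
  -- T₁ is independent in H
  have hT₁indH : IndepSet H T₁ := by
    intro p hp q hq h
    exact hT₁ind p hp q hq ⟨h, (hT₁tr.1 p hp).1, (hT₁tr.1 q hq).1⟩
  -- the middle clique and the restricted coloring
  set R₁ : Finset (V × ℕ) := T₁.filter (fun p => p.1 ∈ A₁ ∩ A₂) with hR₁def
  have hR₁T₁ : R₁ ⊆ T₁ := Finset.filter_subset _ _
  have hR₁tr : IsTransversalOn L ↑(A₁ ∩ A₂) R₁ := by
    constructor
    · intro p hp
      rw [hR₁def, Finset.mem_filter] at hp
      exact ⟨hp.2, (hT₁tr.1 p hp.1).2⟩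
    · intro v hv
      have hv' : v ∈ A₁ ∩ A₂ := hv
      obtain ⟨c, hc, hcu⟩ := hT₁tr.2 v (Finset.mem_inter.mp hv').1
      refine ⟨c, Finset.mem_filter.mpr ⟨hc, hv'⟩, ?_⟩
      intro c' hc'
      rw [hR₁def, Finset.mem_filter] at hc'
      exact hcu c' hc'.1
  have hK2 : (restrictG G ↑A₂).IsNClique ℓ (A₁ ∩ A₂) := by
    refine ⟨?_, hClique.2⟩
    intro u hu v hv huv
    exact ⟨hClique.1 hu hv huv, (Finset.mem_inter.mp hu).2, (Finset.mem_inter.mp hv).2⟩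
  have hR₁ind : IndepSet (Hr A₂) R₁ := by
    rintro p hp q hq ⟨h, -, -⟩
    exact hT₁indH p (hR₁T₁ hp) q (hR₁T₁ hq) h
  obtain ⟨T₂, hT₂tr, hT₂ind, hR₁T₂⟩ := h₂ (A₁ ∩ A₂) (Finset.inter_subset_right) hK2 L hL
    (Hr A₂) (hHr A₂) R₁ hR₁tr hR₁ind
  have hT₂indH : IndepSet H T₂ := by
    intro p hp q hq h
    exact hT₂ind p hp q hq ⟨h, (hT₂tr.1 p hp).1, (hT₂tr.1 q hq).1⟩
  -- key: a vertex of T₂ over A₁ ∩ A₂ lies in R₁ (hence in T₁)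
  have hmid : ∀ p ∈ T₂, p.1 ∈ A₁ ∩ A₂ → p ∈ R₁ := by
    intro p hp hpmid
    obtain ⟨c, hc, hcu⟩ := hT₂tr.2 p.1 (Finset.mem_inter.mp hpmid).2
    obtain ⟨c', hc', -⟩ := hR₁tr.2 p.1 hpmid
    have h1 : p.2 = c := hcu p.2 (by simpa using hp)
    have h2 : c' = c := hcu c' (hR₁T₂ hc')
    have : p = (p.1, c') := by rw [h2, ← h1]
    rw [this]; exact hc'
  refine ⟨T₁ ∪ T₂, ⟨?_, ?_⟩, ?_, fun p hp => Finset.mem_union_left _ (hR₀T₁ hp)⟩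
  · intro p hp
    rcases Finset.mem_union.mp hp with h | h
    · exact ⟨trivial, (hT₁tr.1 p h).2⟩
    · exact ⟨trivial, (hT₂tr.1 p h).2⟩
  · intro v _
    have hv : v ∈ A₁ ∪ A₂ := by rw [hUnion]; exact Finset.mem_univ v
    rcases Finset.mem_union.mp hv with h1 | h2
    · obtain ⟨c, hc, hcu⟩ := hT₁tr.2 v h1
      refine ⟨c, Finset.mem_union_left _ hc, ?_⟩
      intro c' hc'
      rcases Finset.mem_union.mp hc' with h | h
      · exact hcu c' h
      · have hv1 : v ∈ A₁ ∩ A₂ := Finset.mem_inter.mpr ⟨h1, ((hT₂tr.1 _ h).1 : v ∈ A₂)⟩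
        exact hcu c' (hR₁T₁ (hmid (v, c') h hv1))
    · obtain ⟨c, hc, hcu⟩ := hT₂tr.2 v h2
      refine ⟨c, Finset.mem_union_right _ hc, ?_⟩
      intro c' hc'
      rcases Finset.mem_union.mp hc' with h | h
      · have hv1 : v ∈ A₁ ∩ A₂ := Finset.mem_inter.mpr ⟨((hT₁tr.1 _ h).1 : v ∈ A₁), h2⟩
        have : (v, c') ∈ R₁ := Finset.mem_filter.mpr ⟨h, hv1⟩
        exact hcu c' (hR₁T₂ this)
      · exact hcu c' h
  · -- independence of the union
    intro p hp q hq h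
    rcases Finset.mem_union.mp hp with hp1 | hp2 <;> rcases Finset.mem_union.mp hq with hq1 | hq2
    · exact hT₁indH p hp1 q hq1 h
    · -- p ∈ T₁, q ∈ T₂
      have hadj := (hH.1 p q h).1
      rcases hEdges _ _ hadj with ⟨hu, hv⟩ | ⟨hu, hv⟩
      · have hq1 : q ∈ T₁ := hR₁T₁ (hmid q hq2
          (Finset.mem_inter.mpr ⟨hv, (hT₂tr.1 q hq2).1⟩))
        exact hT₁indH p hp1 q hq1 h
      · have hp2' : p ∈ T₂ := hR₁T₂ (Finset.mem_filter.mpr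
          ⟨hp1, Finset.mem_inter.mpr ⟨(hT₁tr.1 p hp1).1, hu⟩⟩)
        exact hT₂indH p hp2' q hq2 h
    · have hadj := (hH.1 p q h).1
      rcases hEdges _ _ hadj with ⟨hu, hv⟩ | ⟨hu, hv⟩
      · have hp1 : p ∈ T₁ := hR₁T₁ (hmid p hp2
          (Finset.mem_inter.mpr ⟨hu, (hT₂tr.1 p hp2).1⟩))
        exact hT₁indH p hp1 q hq1 h
      · have hq2' : q ∈ T₂ := hR₁T₂ (Finset.mem_filter.mpr
          ⟨hq1, Finset.mem_inter.mpr ⟨(hT₁tr.1 q hq1).1, hv⟩⟩)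
        exact hT₂indH p hp2 q hq2' h
    · exact hT₂indH p hp2 q hq2 h
end
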